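/- arXiv:math/0605700 — 2 statements merged into one kernel-verified Lean document; each statement's English description precedes it below -/
import Mathlib

section
/- For positive integers k₁,…,kₙ and a smooth compactly supported function φ on ℝⁿ, the Laplace integral ∫ φ(u) exp(−(u₁^{2k₁}+⋯+uₙ^{2kₙ})/t) du is asymptotic, as t ↓ 0, to c · φ(0) · t^{1/(2k₁)+⋯+1/(2kₙ)}, where c = ∏ⱼ Γ(1/(2kⱼ))/kⱼ, provided φ(0) ≠ 0; more precisely the integral equals t^{1/(2k₁)+⋯+1/(2kₙ)} (c φ(0) + o(1)) as t ↓ 0. -/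
open MeasureTheory Real Filter

lemma aux_integrable_exp_neg_even_pow (m : ℕ) (hm : 1 ≤ m) :
    Integrable (fun x : ℝ => Real.exp (-(x ^ (2 * m)))) := by
  have hcont : Continuous fun x : ℝ => Real.exp (-(x ^ (2 * m))) := by continuity
  refine ((integrable_exp_neg_mul_sq one_pos).const_mul (Real.exp 1)).mono
    hcont.aestronglyMeasurable ?_
  filter_upwards with x
  rw [Real.norm_eq_abs, Real.norm_eq_abs, abs_of_pos (Real.exp_pos _),
    abs_of_pos (by positivity), ← Real.exp_add]
  apply Real.exp_le_exp.mpr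
  have h2 : x ^ (2 * m) = (x ^ 2) ^ m := by rw [pow_mul]
  rcases le_or_gt (x ^ 2) 1 with h | h
  · nlinarith [pow_nonneg (sq_nonneg x) m]
  · have := le_self_pow₀ h.le (Nat.one_le_iff_ne_zero.mp hm)
    nlinarith

lemma aux_integral_exp_neg_even_pow (m : ℕ) (hm : 1 ≤ m) :
    ∫ x : ℝ, Real.exp (-(x ^ (2 * m))) = Real.Gamma (1 / (2 * (m : ℝ))) / (m : ℝ) := by
  have hm' : (0:ℝ) < 2 * (m : ℝ) := by positivity
  have h : ∀ x : ℝ, Real.exp (-(x ^ (2 * m)))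
      = (fun y : ℝ => Real.exp (-(y ^ (2 * (m:ℝ))))) |x| := by
    intro x
    have : |x| ^ (2 * (m:ℝ)) = x ^ (2 * m) := by
      rw [show (2 * (m:ℝ)) = ((2 * m : ℕ) : ℝ) by push_cast; ring, Real.rpow_natCast,
        ← abs_pow, abs_of_nonneg (by rw [pow_mul]; positivity)]
    simp only [this]
  simp_rw [h]
  rw [integral_comp_abs (f := fun y : ℝ => Real.exp (-(y ^ (2 * (m:ℝ)))))]
  have h2 : (∫ x in Set.Ioi (0:ℝ), Real.exp (-(x ^ (2 * (m:ℝ)))))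
      = Real.Gamma (1 / (2 * (m:ℝ)) + 1) := by
    simpa using integral_exp_neg_rpow hm'
  rw [h2, Real.Gamma_add_one (by positivity)]
  have hmne : (m : ℝ) ≠ 0 := by positivity
  field_simp

lemma aux_cov {n : ℕ} {c : Fin n → ℝ} (hc : ∀ j, 0 < c j) (f : (Fin n → ℝ) → ℝ) :
    ∫ v : Fin n → ℝ, f v = (∏ j, c j) * ∫ v : Fin n → ℝ, f (fun j => c j * v j) := by
  have hdet : LinearMap.det (Matrix.toLin' (Matrix.diagonal c)) = ∏ j, c j := by
    rw [LinearMap.det_toLin', Matrix.det_diagonal]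
  have hL : ⇑(Matrix.toLin' (Matrix.diagonal c)) = fun v j => c j * v j := by
    funext v j
    simp [Matrix.toLin'_apply, Matrix.mulVec_diagonal]
  have hprod : 0 < ∏ j, c j := Finset.prod_pos fun j _ => hc j
  have hmap : Measure.map (fun (v : Fin n → ℝ) j => c j * v j) volume
      = ENNReal.ofReal (∏ j, c j)⁻¹ • volume := by
    rw [← hL, Measure.map_linearMap_addHaar_eq_smul_addHaar volume (by rw [hdet]; exact hprod.ne')]
    rw [hdet, abs_of_pos (inv_pos.mpr hprod)]
  have hemb : MeasurableEmbedding (fun (v : Fin n → ℝ) j => c j * v j) :=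
    (MeasurableEquiv.piCongrRight
      (fun j => (Homeomorph.mulLeft₀ (c j) (hc j).ne').toMeasurableEquiv)).measurableEmbedding
  have key := hemb.integral_map (μ := volume) (g := f)
  rw [hmap, integral_smul_measure, ENNReal.toReal_ofReal (by positivity)] at key
  rw [← key, smul_eq_mul, ← mul_assoc, mul_inv_cancel₀ hprod.ne', one_mul]

/-- For positive integers `k₁,…,kₙ` and a smooth compactly supported `φ` on `ℝⁿ` with
`φ(0) ≠ 0`, the Laplace integral `∫ φ(u) exp(−(u₁^{2k₁}+⋯+uₙ^{2kₙ})/t) du` equals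
`t^{1/(2k₁)+⋯+1/(2kₙ)} (c φ(0) + o(1))` as `t ↓ 0`, where `c = ∏ⱼ Γ(1/(2kⱼ))/kⱼ`. -/
theorem laplace_asymptotics_diagonal {n : ℕ} (k : Fin n → ℕ) (hk : ∀ j, 1 ≤ k j)
    (φ : EuclideanSpace ℝ (Fin n) → ℝ) (hφ : ContDiff ℝ (⊤ : ℕ∞) φ)
    (hφc : HasCompactSupport φ) (hφ0 : φ 0 ≠ 0) :
    Tendsto
      (fun t : ℝ =>
        (∫ u : EuclideanSpace ℝ (Fin n),
            φ u * Real.exp (-(∑ j, (u j) ^ (2 * k j)) / t)) /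
          t ^ (∑ j, (1 : ℝ) / (2 * (k j : ℝ))))
      (nhdsWithin 0 (Set.Ioi 0))
      (nhds ((∏ j, Real.Gamma (1 / (2 * (k j : ℝ))) / (k j : ℝ)) * φ 0)) := by
  set α : Fin n → ℝ := fun j => 1 / (2 * (k j : ℝ)) with hα_def
  have hα : ∀ j, 0 < α j := fun j => by
    have : (0:ℝ) < (k j : ℝ) := by exact_mod_cast (hk j)
    positivity
  set s : ℝ := ∑ j, α j with hs_def
  set E1 : (Fin n → ℝ) → ℝ := fun v => Real.exp (-(∑ j, v j ^ (2 * k j))) with hE1_def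
  set ψ : (Fin n → ℝ) → ℝ :=
    fun x => φ ((MeasurableEquiv.toLp 2 (Fin n → ℝ)) x) with hψ_def
  have hψcont : Continuous ψ :=
    hφ.continuous.comp (PiLp.continuous_toLp 2 (fun _ : Fin n => ℝ))
  have hψ0 : ψ 0 = φ 0 := rfl
  have hE1cont : Continuous E1 :=
    Real.continuous_exp.comp (continuous_finset_sum _ fun j _ =>
      ((continuous_apply j).pow _)).neg
  have hE1nonneg : ∀ v, 0 ≤ E1 v := fun v => (Real.exp_pos _).le
  have hE1prod : ∀ v : Fin n → ℝ, E1 v = ∏ j, Real.exp (-(v j ^ (2 * k j))) := by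
    intro v
    rw [hE1_def, ← Real.exp_sum]
    simp [Finset.sum_neg_distrib]
  have hE1int : Integrable E1 := by
    have := Integrable.fintype_prod (f := fun j (x : ℝ) => Real.exp (-(x ^ (2 * k j))))
      (fun j => aux_integrable_exp_neg_even_pow (k j) (hk j))
    exact this.congr (by filter_upwards with v using (hE1prod v).symm)
  have hE1val : ∫ v : Fin n → ℝ, E1 v = ∏ j, Real.Gamma (α j) / (k j : ℝ) := by
    simp_rw [hE1prod]
    rw [volume_pi, integral_fintype_prod_eq_prod (f := fun j (x : ℝ) => Real.exp (-(x ^ (2 * k j))))]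
    exact Finset.prod_congr rfl fun j _ => aux_integral_exp_neg_even_pow (k j) (hk j)
  -- the rescaled integral
  set G : ℝ → ℝ := fun t => ∫ v : Fin n → ℝ, ψ (fun j => t ^ α j * v j) * E1 v with hG_def
  -- Step 1 & 2: for t > 0 the quotient equals G t
  have hquot : ∀ t ∈ Set.Ioi (0:ℝ),
      (∫ u : EuclideanSpace ℝ (Fin n),
          φ u * Real.exp (-(∑ j, (u j) ^ (2 * k j)) / t)) / t ^ s = G t := by
    intro t ht
    have ht' : (0:ℝ) < t := ht
    have htransfer :
        (∫ u : EuclideanSpace ℝ (Fin n), φ u * Real.exp (-(∑ j, (u j) ^ (2 * k j)) / t))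
        = ∫ x : Fin n → ℝ, ψ x * Real.exp (-(∑ j, x j ^ (2 * k j)) / t) :=
      (((EuclideanSpace.volume_preserving_symm_measurableEquiv_toLp (Fin n)).symm _).integral_comp
        (MeasurableEquiv.measurableEmbedding _)
        (fun u => φ u * Real.exp (-(∑ j, (u j) ^ (2 * k j)) / t))).symm
    have hc : ∀ j, 0 < t ^ α j := fun j => Real.rpow_pos_of_pos ht' _
    have hprodc : ∏ j, t ^ α j = t ^ s := by
      rw [hs_def]
      simp_rw [Real.rpow_def_of_pos ht', ← Real.exp_sum, Finset.mul_sum]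
    have hpow : ∀ j (y : ℝ), (t ^ α j * y) ^ (2 * k j) = t * y ^ (2 * k j) := by
      intro j y
      rw [mul_pow]
      congr 1
      rw [← Real.rpow_natCast (t ^ α j) (2 * k j), ← Real.rpow_mul ht'.le]
      have hkne : ((k j : ℝ)) ≠ 0 := by
        have : (0:ℝ) < (k j : ℝ) := by exact_mod_cast hk j
        exact this.ne'
      have : α j * ((2 * k j : ℕ) : ℝ) = 1 := by
        rw [hα_def]; push_cast; field_simp
      rw [this, Real.rpow_one]
    have hcov := aux_cov hc (fun x => ψ x * Real.exp (-(∑ j, x j ^ (2 * k j)) / t))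
    have hinner : ∀ v : Fin n → ℝ,
        ψ (fun j => t ^ α j * v j) * Real.exp (-(∑ j, (t ^ α j * v j) ^ (2 * k j)) / t)
        = ψ (fun j => t ^ α j * v j) * E1 v := by
      intro v
      congr 1
      rw [hE1_def]
      congr 1
      simp_rw [hpow, ← Finset.mul_sum]
      field_simp
    rw [htransfer, hcov, hprodc]
    simp only [hinner]
    rw [mul_comm, mul_div_assoc, div_self (Real.rpow_pos_of_pos ht' s).ne', mul_one, hG_def]
  -- Step 3: dominated convergence
  obtain ⟨C, hC⟩ := hφ.continuous.bounded_above_of_compact_support hφc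
  have hCψ : ∀ y, ‖ψ y‖ ≤ C := fun y => hC _
  have hlimG : Tendsto G (nhdsWithin 0 (Set.Ioi 0)) (nhds (φ 0 * ∫ v : Fin n → ℝ, E1 v)) := by
    have key : Tendsto G (nhdsWithin 0 (Set.Ioi 0))
        (nhds (∫ v : Fin n → ℝ, φ 0 * E1 v)) := by
      apply tendsto_integral_filter_of_dominated_convergence (bound := fun v => C * E1 v)
      · filter_upwards with t
        exact ((hψcont.comp (continuous_pi fun j =>
          continuous_const.mul (continuous_apply j))).mul hE1cont).aestronglyMeasurable
      · filter_upwards with t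
        filter_upwards with v
        rw [norm_mul, Real.norm_eq_abs (E1 v), abs_of_nonneg (hE1nonneg v)]
        exact mul_le_mul_of_nonneg_right (hCψ _) (hE1nonneg v)
      · exact hE1int.const_mul C
      · filter_upwards with v
        have hcoord : ∀ j, Tendsto (fun t : ℝ => t ^ α j * v j)
            (nhdsWithin 0 (Set.Ioi 0)) (nhds 0) := by
          intro j
          have h1 : Tendsto (fun t : ℝ => t ^ α j) (nhds 0) (nhds 0) := by
            have := (Real.continuousAt_rpow_const 0 (α j) (Or.inr (hα j).le)).tendsto
            rwa [Real.zero_rpow (hα j).ne'] at this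
          simpa using (h1.mono_left nhdsWithin_le_nhds).mul_const (v j)
        have htend : Tendsto (fun t : ℝ => (fun j => t ^ α j * v j))
            (nhdsWithin 0 (Set.Ioi 0)) (nhds (0 : Fin n → ℝ)) := by
          rw [tendsto_pi_nhds]
          intro j
          simpa using hcoord j
        have := ((hψcont.tendsto 0).comp htend).mul_const (E1 v)
        rwa [hψ0] at this
    rw [integral_const_mul] at key
    exact key
  -- Conclusion
  have : Tendsto (fun t : ℝ =>
      (∫ u : EuclideanSpace ℝ (Fin n),
          φ u * Real.exp (-(∑ j, (u j) ^ (2 * k j)) / t)) / t ^ s)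
      (nhdsWithin 0 (Set.Ioi 0)) (nhds (φ 0 * ∫ v : Fin n → ℝ, E1 v)) :=
    hlimG.congr' (eventually_nhdsWithin_of_forall fun t ht => (hquot t ht).symm)
  rw [hE1val, mul_comm] at this
  exact this
end

section
/- Let f, f₁, …, f_k be smooth real-valued functions on an open set V ⊆ ℝⁿ that all attain a common value at a point y, such that their gradients at y are all unit vectors and pairwise distinct. Then, in a sufficiently small neighborhood of y, the set of points where at least three of the functions simultaneously achieve the minimum min{f, f₁, …, f_k} is contained in a finite union of smooth submanifolds of dimension at most n − 2. -/
open Filter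

lemma unit_three_li {E : Type*} [NormedAddCommGroup E] [InnerProductSpace ℝ E]
    (a b c : E) (hab : a ≠ b) (hbc : b ≠ c) (hac : a ≠ c)
    (ha : ‖a‖ = 1) (hb : ‖b‖ = 1) (hc : ‖c‖ = 1)
    (s t : ℝ) (hst : s • (a - b) + t • (b - c) = 0) : s = 0 ∧ t = 0 := by
  have hu : a - b ≠ 0 := sub_ne_zero.2 hab
  by_cases ht : t = 0
  · subst ht
    simp only [zero_smul, add_zero] at hst
    rcases smul_eq_zero.1 hst with h | h
    · exact ⟨h, rfl⟩
    · exact absurd h hu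
  · exfalso
    set r : ℝ := -s / t with hr
    have hbc' : b - c = r • (a - b) := by
      have h0 : t • (b - c) = (-s) • (a - b) := by
        rw [neg_smul]; linear_combination (norm := module) hst
      have := congrArg (fun v : E => t⁻¹ • v) h0
      simp only [smul_smul, inv_mul_cancel₀ ht, one_smul] at this
      rw [this, hr]; rw [div_eq_inv_mul]
    have hceq : c = a - (1 + r) • (a - b) := by
      have : c = b - r • (a - b) := by rw [← hbc']; abel
      rw [this]; module
    set u := a - b with hu'
    have hau : ‖a - u‖ = 1 := by rw [hu']; simpa using hb
    have key : ∀ l : ℝ, ‖a - l • u‖ = 1 → l ^ 2 * ‖u‖ ^ 2 = 2 * l * (inner ℝ a u : ℝ) := by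
      intro l hl
      have := norm_sub_sq_real a (l • u)
      rw [hl, ha, real_inner_smul_right, norm_smul] at this
      simp only [Real.norm_eq_abs, mul_pow, sq_abs] at this
      nlinarith [this]
    have h1 : ‖u‖ ^ 2 = 2 * (inner ℝ a u : ℝ) := by
      have := key 1 (by simpa using hau)
      simpa using this
    have h2 : (1 + r) ^ 2 * ‖u‖ ^ 2 = 2 * (1 + r) * (inner ℝ a u : ℝ) := by
      apply key
      rw [← hceq] at *; exact hc
    have hune : ‖u‖ ^ 2 ≠ 0 := by
      simpa using (norm_ne_zero_iff.2 hu)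
    have hfac : (1 + r) * ((1 + r) - 1) = 0 := by
      have h3 : ((1 + r) ^ 2 - (1 + r)) * ‖u‖ ^ 2 = 0 := by linear_combination h2 - (1 + r) * h1
      rcases mul_eq_zero.1 h3 with h | h
      · linarith [h]
      · exact absurd h hune
    rcases mul_eq_zero.1 hfac with h | h
    · -- 1 + r = 0 → c = a
      apply hac
      rw [hceq, h, zero_smul, sub_zero]
    · -- r = 0 → b = c
      apply hbc
      have hr0 : r = 0 := by linarith
      rw [hr0, zero_smul] at hbc'
      exact sub_eq_zero.1 hbc'

lemma dual_three_li {E : Type*} [NormedAddCommGroup E] [InnerProductSpace ℝ E]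
    [CompleteSpace E] (D₁ D₂ D₃ : E →L[ℝ] ℝ)
    (h12 : D₁ ≠ D₂) (h23 : D₂ ≠ D₃) (h13 : D₁ ≠ D₃)
    (h1 : ‖D₁‖ = 1) (h2 : ‖D₂‖ = 1) (h3 : ‖D₃‖ = 1) :
    LinearIndependent ℝ ![D₁ - D₂, D₂ - D₃] := by
  set T := (InnerProductSpace.toDual ℝ E).symm
  rw [LinearIndependent.pair_iff]
  intro s t hst
  refine unit_three_li (T D₁) (T D₂) (T D₃) ?_ ?_ ?_ ?_ ?_ ?_ s t ?_
  · exact fun h => h12 (T.injective h)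
  · exact fun h => h23 (T.injective h)
  · exact fun h => h13 (T.injective h)
  · rw [T.norm_map, h1]
  · rw [T.norm_map, h2]
  · rw [T.norm_map, h3]
  · have := congrArg T hst
    simpa [map_add, map_sub, map_smul] using this

/-- Let `f₀, …, f_k` (`k ≥ 2`) be smooth local distance functions on an open set
`V ⊆ ℝⁿ`, all attaining a common value at `y ∈ V`, whose gradients at `y` are unit vectors and
pairwise distinct.  Then, in a sufficiently small neighborhood of `y`, every point at which at
least three of the functions simultaneously achieve the minimum `min{f₀, …, f_k}` lies on a
transverse intersection of two of the pairwise equality hypersurfaces; i.e. the set of such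
points is contained in a finite union of smooth submanifolds of dimension at most `n − 2`. -/
theorem triple_coincidence_in_codim_two {n k : ℕ} (hk : 2 ≤ k)
    (V : Set (EuclideanSpace ℝ (Fin n))) (hV : IsOpen V)
    (f : Fin (k + 1) → EuclideanSpace ℝ (Fin n) → ℝ)
    (hf : ∀ i, ContDiffOn ℝ (⊤ : ℕ∞) (f i) V)
    (y : EuclideanSpace ℝ (Fin n)) (hy : y ∈ V)
    (c : ℝ) (hval : ∀ i, f i y = c)
    (hnorm : ∀ i, ‖fderiv ℝ (f i) y‖ = 1)
    (hdist : ∀ i j, i ≠ j → fderiv ℝ (f i) y ≠ fderiv ℝ (f j) y) :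
    ∃ U ∈ nhds y, ∀ x ∈ U ∩ V,
      (∃ i j l : Fin (k + 1), i ≠ j ∧ j ≠ l ∧ i ≠ l ∧
          f i x = Finset.univ.inf' Finset.univ_nonempty (fun r => f r x) ∧
          f j x = Finset.univ.inf' Finset.univ_nonempty (fun r => f r x) ∧
          f l x = Finset.univ.inf' Finset.univ_nonempty (fun r => f r x)) →
      ∃ i j l : Fin (k + 1), i ≠ j ∧ j ≠ l ∧ i ≠ l ∧
        f i x = f j x ∧ f j x = f l x ∧
        LinearIndependent ℝ
          ![fderiv ℝ (fun z => f i z - f j z) x, fderiv ℝ (fun z => f j z - f l z) x] := by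
  set g : Fin (k + 1) → Fin (k + 1) → EuclideanSpace ℝ (Fin n) → (EuclideanSpace ℝ (Fin n) →L[ℝ] ℝ) :=
    fun i j x => fderiv ℝ (fun z => f i z - f j z) x with hg
  have hdiff : ∀ i, DifferentiableAt ℝ (f i) y := fun i =>
    ((hf i).contDiffAt (hV.mem_nhds hy)).differentiableAt (by simp)
  have hgcont : ∀ i j, ContinuousOn (g i j) V := fun i j =>
    ContDiffOn.continuousOn_fderiv_of_isOpen ((hf i).sub (hf j)) hV (by simp)
  have hgy : ∀ i j, g i j y = fderiv ℝ (f i) y - fderiv ℝ (f j) y := fun i j =>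
    fderiv_sub (hdiff i) (hdiff j)
  have hev : ∀ i j l : Fin (k + 1), i ≠ j → j ≠ l → i ≠ l →
      ∀ᶠ x in nhds y, LinearIndependent ℝ ![g i j x, g j l x] := by
    intro i j l hij hjl hil
    have hLIy : LinearIndependent ℝ ![g i j y, g j l y] := by
      rw [hgy, hgy]
      exact dual_three_li _ _ _ (hdist i j hij) (hdist j l hjl) (hdist i l hil)
        (hnorm i) (hnorm j) (hnorm l)
    have hFcont : ContinuousAt (fun x => ![g i j x, g j l x]) y := by
      apply continuousAt_pi.2
      intro m
      fin_cases m
      · simpa using ((hgcont i j).continuousAt (hV.mem_nhds hy))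
      · simpa using ((hgcont j l).continuousAt (hV.mem_nhds hy))
    exact hFcont (isOpen_setOf_linearIndependent.mem_nhds hLIy)
  have hall : ∀ᶠ x in nhds y, ∀ i j l : Fin (k + 1), i ≠ j → j ≠ l → i ≠ l →
      LinearIndependent ℝ ![g i j x, g j l x] := by
    rw [eventually_all]; intro i
    rw [eventually_all]; intro j
    rw [eventually_all]; intro l
    by_cases hij : i ≠ j
    · by_cases hjl : j ≠ l
      · by_cases hil : i ≠ l
        · exact (hev i j l hij hjl hil).mono fun x h _ _ _ => h
        · exact Eventually.of_forall fun x _ _ h => absurd h hil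
      · exact Eventually.of_forall fun x _ h _ => absurd h hjl
    · exact Eventually.of_forall fun x h _ _ => absurd h hij
  refine ⟨_, hall, ?_⟩
  rintro x ⟨hxU, hxV⟩ ⟨i, j, l, hij, hjl, hil, h1, h2, h3⟩
  exact ⟨i, j, l, hij, hjl, hil, by rw [h1, h2], by rw [h2, h3],
    hxU i j l hij hjl hil⟩
end
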